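/- arXiv:0911.3533 — 3 statements merged into one kernel-verified Lean document; each statement's English description precedes it below -/
import Mathlib

section
/- Let L₀ := { f : ℝ^d → ℝ : f bounded and Lipschitz, f(0) = 0, f(x) = o(|x|) as x → 0 }. Let F : L₀ → ℝ be a functional which is monotone (f ≤ g pointwise implies F[f] ≤ F[g]), sub-additive (F[f+g] ≤ F[f] + F[g]), positively homogeneous (F[λf] = λF[f] for λ ≥ 0), and which satisfies the growth bound: there exists a constant C such that F[f] ≤ C·a whenever f ∈ L₀ satisfies f(x) ≤ a|x| for all x. If f_n ∈ L₀ is a sequence with f_n ↓ 0 pointwise (nonincreasing and converging to 0 at every point), then F[f_n] ↓ 0. -/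
open Filter Topology

/-!
Monotonicity makes `F (fn n)` decreasing and nonnegative, so it suffices that its infimum is
`≤ 0`. Fix `ε > 0` and `η > 0` with `fn 0 x ≤ ε |x|` for `|x| ≤ η`. For every `ε' > 0` and all
large `n`, `fn n ≤ min (fn 0) (ε |·|) + ε' · min (|·|, η) ^ 2`: near `0` and far out (where
`fn 0 ≤ sup (fn 0) ≤ ε |x|`) the first term dominates, and on the compact region in between
Dini's theorem makes `fn n` uniformly smaller than `ε' η ^ 2`. The growth bound gives
`F (min (fn 0) (ε |·|)) ≤ C ε`, so sub-additivity and homogeneity give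
`F (fn n) ≤ C ε + ε' F (min (|·|, η) ^ 2)`; let `ε' → 0`, then `ε → 0`.
-/

/-- The Euclidean norm of a vector in `α → ℝ`. -/
noncomputable def euclNorm {α : Type*} [Fintype α] (x : α → ℝ) : ℝ :=
  Real.sqrt (∑ i, (x i) ^ 2)

/-- Membership in `L₀`: bounded, Lipschitz, vanishing at `0` and `o(|x|)` as `x → 0`. -/
def MemL0 {d : ℕ} (f : (Fin d → ℝ) → ℝ) : Prop :=
  (∃ M, ∀ x, |f x| ≤ M) ∧
  (∃ K : ℝ, ∀ x y, |f x - f y| ≤ K * euclNorm (x - y)) ∧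
  f 0 = 0 ∧
  (∀ ε : ℝ, 0 < ε → ∃ η : ℝ, 0 < η ∧ ∀ x, euclNorm x ≤ η → |f x| ≤ ε * euclNorm x)

section EuclNorm

variable {ι : Type*} [Fintype ι]

theorem euclNorm_ofLp (y : EuclideanSpace ℝ ι) : euclNorm (WithLp.ofLp y) = ‖y‖ := by
  simp [euclNorm, EuclideanSpace.norm_eq]

theorem euclNorm_eq_norm_toLp (x : ι → ℝ) : euclNorm x = ‖WithLp.toLp 2 x‖ :=
  euclNorm_ofLp (WithLp.toLp 2 x)

theorem euclNorm_nonneg (x : ι → ℝ) : 0 ≤ euclNorm x := Real.sqrt_nonneg _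

@[simp]
theorem euclNorm_zero : euclNorm (0 : ι → ℝ) = 0 := by simp [euclNorm]

theorem abs_euclNorm_sub_euclNorm_le (x y : ι → ℝ) :
    |euclNorm x - euclNorm y| ≤ euclNorm (x - y) := by
  simpa only [euclNorm_eq_norm_toLp, WithLp.toLp_sub] using abs_norm_sub_norm_le _ _

theorem continuous_euclNorm : Continuous (euclNorm (α := ι)) :=
  (continuous_norm.comp (PiLp.continuous_toLp 2 fun _ : ι => ℝ)).congr fun x =>
    (euclNorm_eq_norm_toLp x).symm

theorem isCompact_setOf_euclNorm_le (R : ℝ) : IsCompact {x : ι → ℝ | euclNorm x ≤ R} := by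
  have : {x : ι → ℝ | euclNorm x ≤ R} =
      WithLp.ofLp '' Metric.closedBall (0 : EuclideanSpace ℝ ι) R := by
    ext x
    refine ⟨fun hx => ⟨WithLp.toLp 2 x, ?_, rfl⟩, ?_⟩
    · simpa [euclNorm_eq_norm_toLp] using hx
    · rintro ⟨y, hy, rfl⟩
      simpa [euclNorm_ofLp] using hy
  rw [this]
  exact (isCompact_closedBall _ _).image (PiLp.continuous_ofLp 2 _)

theorem continuous_of_abs_sub_le_mul_euclNorm {f : (ι → ℝ) → ℝ} {K : ℝ}
    (hf : ∀ x y, |f x - f y| ≤ K * euclNorm (x - y)) : Continuous f := by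
  have hlip : LipschitzWith K.toNNReal (f ∘ WithLp.ofLp (p := 2)) := by
    refine LipschitzWith.of_dist_le_mul fun x y => ?_
    calc dist (f x.ofLp) (f y.ofLp) ≤ K * ‖x - y‖ := by
          simpa [Real.dist_eq, ← euclNorm_ofLp] using hf x.ofLp y.ofLp
      _ ≤ K.toNNReal * dist x y := by
          rw [dist_eq_norm]; gcongr; exact Real.le_coe_toNNReal K
  exact hlip.continuous.comp (PiLp.continuous_toLp 2 _)

end EuclNorm

namespace MemL0

variable {d : ℕ} {f g : (Fin d → ℝ) → ℝ}

theorem zero : MemL0 (0 : (Fin d → ℝ) → ℝ) :=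
  ⟨⟨0, by simp⟩, ⟨0, by simp⟩, rfl, fun ε hε =>
    ⟨1, one_pos, fun x _ => by simpa using mul_nonneg hε.le (euclNorm_nonneg x)⟩⟩

theorem add (hf : MemL0 f) (hg : MemL0 g) : MemL0 (f + g) := by
  obtain ⟨⟨Mf, hMf⟩, ⟨Kf, hKf⟩, hf0, hfo⟩ := hf
  obtain ⟨⟨Mg, hMg⟩, ⟨Kg, hKg⟩, hg0, hgo⟩ := hg
  refine ⟨⟨Mf + Mg, fun x => ?_⟩, ⟨Kf + Kg, fun x y => ?_⟩, by simp [hf0, hg0], fun ε hε => ?_⟩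
  · exact (abs_add_le _ _).trans (add_le_add (hMf x) (hMg x))
  · calc |(f + g) x - (f + g) y| = |(f x - f y) + (g x - g y)| := by
          simp only [Pi.add_apply]; ring_nf
      _ ≤ Kf * euclNorm (x - y) + Kg * euclNorm (x - y) :=
          (abs_add_le _ _).trans (add_le_add (hKf x y) (hKg x y))
      _ = (Kf + Kg) * euclNorm (x - y) := by ring
  · obtain ⟨η₁, hη₁, h₁⟩ := hfo (ε / 2) (half_pos hε)
    obtain ⟨η₂, hη₂, h₂⟩ := hgo (ε / 2) (half_pos hε)
    refine ⟨min η₁ η₂, lt_min hη₁ hη₂, fun x hx => ?_⟩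
    calc |(f + g) x| ≤ |f x| + |g x| := abs_add_le _ _
      _ ≤ ε / 2 * euclNorm x + ε / 2 * euclNorm x :=
          add_le_add (h₁ x (hx.trans (min_le_left _ _))) (h₂ x (hx.trans (min_le_right _ _)))
      _ = ε * euclNorm x := by ring

theorem const_smul (c : ℝ) (hf : MemL0 f) : MemL0 (c • f) := by
  obtain ⟨⟨M, hM⟩, ⟨K, hK⟩, hf0, hfo⟩ := hf
  refine ⟨⟨|c| * M, fun x => ?_⟩, ⟨|c| * K, fun x y => ?_⟩, by simp [hf0], fun ε hε => ?_⟩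
  · simpa [abs_mul] using mul_le_mul_of_nonneg_left (hM x) (abs_nonneg c)
  · simpa [← mul_sub, abs_mul, mul_assoc] using mul_le_mul_of_nonneg_left (hK x y) (abs_nonneg c)
  · obtain ⟨η, hη, h⟩ := hfo (ε / (|c| + 1)) (by positivity)
    refine ⟨η, hη, fun x hx => ?_⟩
    calc |(c • f) x| = |c| * |f x| := by simp [abs_mul]
      _ ≤ (|c| + 1) * (ε / (|c| + 1) * euclNorm x) := by
          gcongr
          · linarith
          · exact h x hx
      _ = ε * euclNorm x := by field_simp

theorem of_abs_le (hf : MemL0 f) {K : ℝ} (hgK : ∀ x y, |g x - g y| ≤ K * euclNorm (x - y))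
    (hgf : ∀ x, |g x| ≤ |f x|) : MemL0 g := by
  obtain ⟨⟨M, hM⟩, -, hf0, hfo⟩ := hf
  refine ⟨⟨M, fun x => (hgf x).trans (hM x)⟩, ⟨K, hgK⟩, ?_, fun ε hε => ?_⟩
  · simpa [hf0] using hgf 0
  · obtain ⟨η, hη, h⟩ := hfo ε hε
    exact ⟨η, hη, fun x hx => (hgf x).trans (h x hx)⟩

theorem min_mul_euclNorm (hf : MemL0 f) {ε : ℝ} (hε : 0 ≤ ε) :
    MemL0 fun x => min (f x) (ε * euclNorm x) := by
  obtain ⟨K, hK⟩ := hf.2.1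
  refine hf.of_abs_le (K := max K ε) (fun x y => ?_) (fun x => ?_)
  · have hnorm : |ε * euclNorm x - ε * euclNorm y| ≤ ε * euclNorm (x - y) := by
      rw [← mul_sub, abs_mul, abs_of_nonneg hε]
      exact mul_le_mul_of_nonneg_left (abs_euclNorm_sub_euclNorm_le x y) hε
    refine (abs_min_sub_min_le_max _ _ _ _).trans (max_le ?_ ?_)
    · exact (hK x y).trans (by gcongr; exacts [euclNorm_nonneg _, le_max_left _ _])
    · exact hnorm.trans (by gcongr; exacts [euclNorm_nonneg _, le_max_right _ _])
  · have := mul_nonneg hε (euclNorm_nonneg x)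
    rcases le_total (f x) (ε * euclNorm x) with h | h
    · rw [min_eq_left h]
    · rw [min_eq_right h, abs_of_nonneg this]
      exact h.trans (le_abs_self _)

end MemL0

noncomputable def truncSqEuclNorm {ι : Type*} [Fintype ι] (η : ℝ) (x : ι → ℝ) : ℝ :=
  min (euclNorm x) η ^ 2

section TruncSqEuclNorm

variable {ι : Type*} [Fintype ι] {η : ℝ}

theorem truncSqEuclNorm_nonneg (x : ι → ℝ) : 0 ≤ truncSqEuclNorm η x := sq_nonneg _

theorem truncSqEuclNorm_of_le {x : ι → ℝ} (hx : η ≤ euclNorm x) :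
    truncSqEuclNorm η x = η ^ 2 := by
  rw [truncSqEuclNorm, min_eq_right hx]

theorem abs_truncSqEuclNorm_sub_le (hη : 0 ≤ η) (x y : ι → ℝ) :
    |truncSqEuclNorm η x - truncSqEuclNorm η y| ≤ 2 * η * euclNorm (x - y) := by
  set a := min (euclNorm x) η
  set b := min (euclNorm y) η
  have ha : 0 ≤ a := le_min (euclNorm_nonneg x) hη
  have hb : 0 ≤ b := le_min (euclNorm_nonneg y) hη
  have hab : |a - b| ≤ euclNorm (x - y) := by
    refine (abs_min_sub_min_le_max _ _ _ _).trans ?_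
    simpa using abs_euclNorm_sub_euclNorm_le x y
  calc |a ^ 2 - b ^ 2| = |a - b| * (a + b) := by
        rw [sq_sub_sq, abs_mul, abs_of_nonneg (add_nonneg ha hb), mul_comm]
    _ ≤ euclNorm (x - y) * (2 * η) := by
        refine mul_le_mul hab ?_ (add_nonneg ha hb) (euclNorm_nonneg _)
        linarith [min_le_right (euclNorm x) η, min_le_right (euclNorm y) η]
    _ = 2 * η * euclNorm (x - y) := by ring

end TruncSqEuclNorm

theorem memL0_truncSqEuclNorm {d : ℕ} {η : ℝ} (hη : 0 ≤ η) :
    MemL0 (truncSqEuclNorm (ι := Fin d) η) := by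
  refine ⟨⟨η ^ 2, fun x => ?_⟩, ⟨2 * η, abs_truncSqEuclNorm_sub_le hη⟩,
    by simp [truncSqEuclNorm, hη], fun ε hε => ⟨ε, hε, fun x hx => ?_⟩⟩
  all_goals
    have h0 : 0 ≤ min (euclNorm x) η := le_min (euclNorm_nonneg x) hη
    rw [truncSqEuclNorm, abs_of_nonneg (sq_nonneg _)]
  · exact pow_le_pow_left₀ h0 (min_le_right _ _) 2
  · rw [sq]
    exact mul_le_mul (hx.trans' (min_le_left _ _)) (min_le_left _ _) h0 hε.le

theorem eventually_le_min_mul_euclNorm_add {d : ℕ} {fn : ℕ → (Fin d → ℝ) → ℝ}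
    (hfn : ∀ n, MemL0 (fn n))
    (hanti : ∀ x, Antitone (fn · x)) (hto0 : ∀ x, Tendsto (fn · x) atTop (𝓝 0))
    {ε : ℝ} (hε : 0 < ε) :
    ∃ g, MemL0 g ∧ ∀ ε' > 0, ∀ᶠ n in atTop,
      ∀ x, fn n x ≤ min (fn 0 x) (ε * euclNorm x) + ε' * g x := by
  have hnonneg : ∀ n x, 0 ≤ fn n x := fun n x => (hanti x).le_of_tendsto (hto0 x) n
  obtain ⟨⟨M, hM⟩, -, -, hsmall⟩ := hfn 0
  obtain ⟨η, hη, hη_small⟩ := hsmall ε hε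
  refine ⟨truncSqEuclNorm η, memL0_truncSqEuclNorm hη.le, fun ε' hε' => ?_⟩
  -- outside the ball of radius `M / ε`, `fn 0 ≤ M ≤ ε * euclNorm`
  have hunif := Metric.tendstoUniformlyOn_iff.mp
    (Antitone.tendstoUniformlyOn_of_forall_tendsto (isCompact_setOf_euclNorm_le (M / ε))
      (fun n => (continuous_of_abs_sub_le_mul_euclNorm (hfn n).2.1.choose_spec).continuousOn)
      (fun x _ => hanti x) continuousOn_const fun x _ => hto0 x)
    (ε' * η ^ 2) (by positivity)
  filter_upwards [hunif] with n hn x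
  have hn0 : fn n x ≤ fn 0 x := hanti x (Nat.zero_le n)
  have hg := truncSqEuclNorm_nonneg (η := η) x
  rcases le_or_gt (fn 0 x) (ε * euclNorm x) with hle | hgt
  · rw [min_eq_left hle]
    linarith [mul_nonneg hε'.le hg]
  · have hη_le : η ≤ euclNorm x := by
      by_contra! h
      linarith [le_abs_self (fn 0 x), hη_small x h.le]
    have hR : euclNorm x ≤ M / ε := by
      rw [le_div_iff₀ hε]
      linarith [le_abs_self (fn 0 x), hM x]
    have hfn_small := hn x hR
    rw [Real.dist_eq, zero_sub, abs_neg, abs_of_nonneg (hnonneg n x)] at hfn_small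
    rw [truncSqEuclNorm_of_le hη_le]
    linarith [le_min (hnonneg 0 x) (mul_nonneg hε.le (euclNorm_nonneg x))]

theorem le_of_forall_pos_le_add_mul {a b c : ℝ} (h : ∀ t > 0, a ≤ b + t * c) : a ≤ b := by
  have hcont : Continuous fun t : ℝ => b + t * c := by fun_prop
  have hlim : Tendsto (fun t => b + t * c) (𝓝[>] 0) (𝓝 b) := by
    simpa using (hcont.tendsto 0).mono_left nhdsWithin_le_nhds
  exact ge_of_tendsto hlim (eventually_nhdsWithin_of_forall h)

theorem eventually_le_mul_add_mul {d : ℕ} (F : ((Fin d → ℝ) → ℝ) → ℝ)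
    (hmono : ∀ f g, MemL0 f → MemL0 g → (∀ x, f x ≤ g x) → F f ≤ F g)
    (hsub : ∀ f g, MemL0 f → MemL0 g → F (f + g) ≤ F f + F g)
    (hhom : ∀ lam : ℝ, 0 ≤ lam → ∀ f, MemL0 f → F (lam • f) = lam * F f)
    (C : ℝ)
    (hgrowth : ∀ a : ℝ, 0 ≤ a → ∀ f, MemL0 f → (∀ x, f x ≤ a * euclNorm x) → F f ≤ C * a)
    {fn : ℕ → (Fin d → ℝ) → ℝ} (hfn : ∀ n, MemL0 (fn n))
    (hanti : ∀ x, Antitone (fn · x)) (hto0 : ∀ x, Tendsto (fn · x) atTop (𝓝 0))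
    {ε : ℝ} (hε : 0 < ε) :
    ∃ K, ∀ ε' > 0, ∀ᶠ n in atTop, F (fn n) ≤ C * ε + ε' * K := by
  obtain ⟨g, hg, hdom⟩ := eventually_le_min_mul_euclNorm_add hfn hanti hto0 hε
  have hu := (hfn 0).min_mul_euclNorm hε.le
  have hFu : F (fun x => min (fn 0 x) (ε * euclNorm x)) ≤ C * ε :=
    hgrowth ε hε.le _ hu fun x => min_le_right _ _
  refine ⟨F g, fun ε' hε' => ?_⟩
  have hεg := hg.const_smul ε'
  filter_upwards [hdom ε' hε'] with n hn
  calc F (fn n) ≤ F ((fun x => min (fn 0 x) (ε * euclNorm x)) + ε' • g) :=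
        hmono _ _ (hfn n) (hu.add hεg) hn
    _ ≤ F (fun x => min (fn 0 x) (ε * euclNorm x)) + F (ε' • g) := hsub _ _ hu hεg
    _ ≤ C * ε + ε' * F g := by rw [hhom ε' hε'.le g hg]; linarith

/-- A monotone, sub-additive, positively homogeneous functional `F` on `L₀`
satisfying the growth bound `F[f] ≤ C·a` whenever `f(x) ≤ a|x|` is continuous from
above at `0`: if `f_n ↓ 0` pointwise then `F[f_n] ↓ 0`. -/
theorem stmt9 {d : ℕ} (F : ((Fin d → ℝ) → ℝ) → ℝ)
    (hmono : ∀ f g, MemL0 f → MemL0 g → (∀ x, f x ≤ g x) → F f ≤ F g)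
    (hsub : ∀ f g, MemL0 f → MemL0 g → F (f + g) ≤ F f + F g)
    (hhom : ∀ lam : ℝ, 0 ≤ lam → ∀ f, MemL0 f → F (lam • f) = lam * F f)
    (C : ℝ)
    (hgrowth : ∀ a : ℝ, 0 ≤ a → ∀ f, MemL0 f → (∀ x, f x ≤ a * euclNorm x) → F f ≤ C * a)
    (fn : ℕ → (Fin d → ℝ) → ℝ) (hfn : ∀ n, MemL0 (fn n))
    (hanti : ∀ n x, fn (n + 1) x ≤ fn n x)
    (hto0 : ∀ x, Filter.Tendsto (fun n => fn n x) atTop (𝓝 0)) :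
    Filter.Tendsto (fun n => F (fn n)) atTop (𝓝 0) ∧ ∀ n, F (fn (n + 1)) ≤ F (fn n) := by
  have hanti_x : ∀ x, Antitone (fn · x) := fun x => antitone_nat_of_succ_le (hanti · x)
  have hF_anti : Antitone (fun n => F (fn n)) :=
    antitone_nat_of_succ_le fun n => hmono _ _ (hfn _) (hfn n) (hanti n)
  have hF_zero : F 0 = 0 := by simpa using hhom 0 le_rfl 0 MemL0.zero
  have hF_nonneg : ∀ n, 0 ≤ F (fn n) := fun n => hF_zero ▸
    hmono _ _ MemL0.zero (hfn n) fun x => (hanti_x x).le_of_tendsto (hto0 x) n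
  refine ⟨?_, fun n => hF_anti n.le_succ⟩
  have hbdd : BddBelow (Set.range fun n => F (fn n)) := ⟨0, Set.forall_mem_range.mpr hF_nonneg⟩
  have hlim := tendsto_atTop_ciInf hF_anti hbdd
  suffices hinf : ⨅ n, F (fn n) ≤ 0 by
    rwa [le_antisymm hinf (le_ciInf hF_nonneg)] at hlim
  refine le_of_forall_pos_le_add_mul (c := C) fun ε hε => ?_
  obtain ⟨K, hK⟩ := eventually_le_mul_add_mul F hmono hsub hhom C hgrowth hfn hanti_x hto0 hε
  refine le_of_forall_pos_le_add_mul (c := K) fun ε' hε' => ?_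
  obtain ⟨n, hn⟩ := (hK ε' hε').exists
  calc ⨅ n, F (fn n) ≤ F (fn n) := ciInf_le hbdd n
    _ ≤ 0 + ε * C + ε' * K := by linarith
end

section
/- Let (X_t)_{t≥0} be a d-dimensional G-Lévy process on a sublinear expectation space (Ω, H, Ê) with decomposition X_t = X_t^c + X_t^d satisfying Ê[|X_s^c|] ≤ C√s for s ∈ (0,1] and Ê[|X_s^d|] ≤ Cs for s ≥ 0. Let φ : ℝ^d → ℝ be bounded and L-Lipschitz and define u(t,x) := Ê[φ(x + X_t)]. Then: (i) |u(t,x) − u(t,y)| ≤ L|x − y| for all t ≥ 0 and x, y ∈ ℝ^d; (ii) there is a constant C₁ (depending only on L and C) such that |u(t+s, x) − u(t,x)| ≤ C₁ √s for all t ≥ 0, 0 ≤ s ≤ 1 and x ∈ ℝ^d. -/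
open Filter Topology

/-- A sublinear expectation on the space of all real-valued functions on `Ω`:
monotone, constant preserving, sub-additive and positively homogeneous. -/
structure SublinearExpectation (Ω : Type*) where
  E : (Ω → ℝ) → ℝ
  mono : ∀ X Y : Ω → ℝ, (∀ ω, X ω ≤ Y ω) → E X ≤ E Y
  const : ∀ c : ℝ, E (fun _ => c) = c
  subadd : ∀ X Y : Ω → ℝ, E X - E Y ≤ E (fun ω => X ω - Y ω)
  poshom : ∀ lam : ℝ, 0 ≤ lam → ∀ X : Ω → ℝ, E (fun ω => lam * X ω) = lam * E X

/-- `Y` is independent from `X` under the sublinear expectation `E`: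
`E[φ(X,Y)] = E[ x ↦ E[φ(x,Y)] evaluated at X ]` for all Lipschitz test functions `φ`. -/
def IsIndepFrom {Ω : Type*} (E : (Ω → ℝ) → ℝ) {α β : Type*} [Fintype α] [Fintype β]
    (Y : Ω → α → ℝ) (X : Ω → β → ℝ) : Prop :=
  ∀ φ : (β → ℝ) × (α → ℝ) → ℝ, (∃ K : NNReal, LipschitzWith K φ) →
    E (fun ω => φ (X ω, Y ω)) = E (fun ω => E (fun ω' => φ (X ω, Y ω')))

/-- `X` and `X'` are identically distributed under the sublinear expectation `E`. -/
def IdenticallyDistributed {Ω : Type*} (E : (Ω → ℝ) → ℝ) {α : Type*} [Fintype α]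
    (X X' : Ω → α → ℝ) : Prop :=
  ∀ φ : (α → ℝ) → ℝ, (∃ K : NNReal, LipschitzWith K φ) →
    E (fun ω => φ (X ω)) = E (fun ω => φ (X' ω))

/-- A path `f : ℝ → α` is càdlàg on `[0, ∞)`: right continuous with left limits. -/
def Cadlag {α : Type*} [TopologicalSpace α] (f : ℝ → α) : Prop :=
  (∀ t : ℝ, 0 ≤ t → Filter.Tendsto f (nhdsWithin t (Set.Ici t)) (nhds (f t))) ∧
  (∀ t : ℝ, 0 < t → ∃ l, Filter.Tendsto f (nhdsWithin t (Set.Ico 0 t)) (nhds l))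

/-- A Lévy process under a sublinear expectation: càdlàg paths, `X_0 = 0`,
increments `X_{t+s} − X_t` independent from `(X_{t_1}, …, X_{t_m})` for
`0 ≤ t_1 ≤ ⋯ ≤ t_m ≤ t`, and `X_{t+s} − X_t` identically distributed as `X_s`. -/
def IsLevyProcess {Ω : Type*} (E : (Ω → ℝ) → ℝ) {α : Type*} [Fintype α]
    (X : ℝ → Ω → α → ℝ) : Prop :=
  (∀ ω, X 0 ω = 0) ∧
  (∀ ω, Cadlag fun t => X t ω) ∧
  (∀ t s : ℝ, 0 ≤ t → 0 < s → ∀ (m : ℕ) (ts : Fin m → ℝ), Monotone ts →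
    (∀ i, 0 ≤ ts i ∧ ts i ≤ t) →
    IsIndepFrom E (fun ω i => X (t + s) ω i - X t ω i)
      (fun ω (p : Fin m × α) => X (ts p.1) ω p.2)) ∧
  (∀ t s : ℝ, 0 ≤ t → 0 ≤ s →
    IdenticallyDistributed E (fun ω i => X (t + s) ω i - X t ω i) (X s))

lemma euclNorm_eq_norm {α : Type*} [Fintype α] (x : α → ℝ) :
    euclNorm x = ‖(WithLp.equiv 2 (α → ℝ)).symm x‖ := by
  rw [EuclideanSpace.norm_eq]
  simp [euclNorm, sq_abs]

lemma euclNorm_lip {α : Type*} [Fintype α] :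
    ∃ K : NNReal, LipschitzWith K (euclNorm (α := α)) := by
  set e : (α → ℝ) →L[ℝ] EuclideanSpace ℝ α :=
    (EuclideanSpace.equiv α ℝ).symm.toContinuousLinearMap with he
  refine ⟨1 * ‖e‖₊, ?_⟩
  have : euclNorm (α := α) = (fun y : EuclideanSpace ℝ α => ‖y‖) ∘ e := by
    funext x; exact euclNorm_eq_norm x
  rw [this]
  exact lipschitzWith_one_norm.comp e.lipschitz

lemma euclNorm_nonneg_s11 {α : Type*} [Fintype α] (x : α → ℝ) : 0 ≤ euclNorm x :=
  Real.sqrt_nonneg _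

lemma euclNorm_add_le {α : Type*} [Fintype α] (x y : α → ℝ) :
    euclNorm (x + y) ≤ euclNorm x + euclNorm y := by
  simp only [euclNorm_eq_norm]
  exact norm_add_le ((WithLp.equiv 2 (α → ℝ)).symm x) ((WithLp.equiv 2 (α → ℝ)).symm y)

lemma sle_abs_sub {Ω : Type*} (𝓔 : SublinearExpectation Ω) (F G H : Ω → ℝ)
    (h : ∀ ω, |F ω - G ω| ≤ H ω) : |𝓔.E F - 𝓔.E G| ≤ 𝓔.E H := by
  rw [abs_le]
  constructor
  · have h1 := 𝓔.subadd G F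
    have h2 : 𝓔.E (fun ω => G ω - F ω) ≤ 𝓔.E H :=
      𝓔.mono _ _ fun ω => by have := (abs_le.mp (h ω)).1; linarith
    linarith
  · have h1 := 𝓔.subadd F G
    have h2 : 𝓔.E (fun ω => F ω - G ω) ≤ 𝓔.E H :=
      𝓔.mono _ _ fun ω => by have := (abs_le.mp (h ω)).2; linarith
    linarith

/-- For a `G`-Lévy process `X = X^c + X^d` with `Ê[|X_s^c|] ≤ C√s` (`s ∈ (0,1]`) and
`Ê[|X_s^d|] ≤ Cs` (`s ≥ 0`), and `φ` bounded `L`-Lipschitz, `u(t,x) := Ê[φ(x + X_t)]`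
satisfies `|u(t,x) − u(t,y)| ≤ L|x − y|` and `|u(t+s,x) − u(t,x)| ≤ C₁√s`. -/
theorem stmt11 {Ω : Type*} (𝓔 : SublinearExpectation Ω) {d : ℕ}
    (X Xc Xd : ℝ → Ω → Fin d → ℝ)
    (hdecomp : ∀ t ω, X t ω = Xc t ω + Xd t ω)
    (hX : IsLevyProcess 𝓔.E X)
    (hpair : IsLevyProcess 𝓔.E fun t ω (p : Fin d ⊕ Fin d) => Sum.elim (Xc t ω) (Xd t ω) p)
    (C : ℝ)
    (hcC : ∀ s : ℝ, 0 < s → s ≤ 1 → 𝓔.E (fun ω => euclNorm (Xc s ω)) ≤ C * Real.sqrt s)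
    (hdC : ∀ s : ℝ, 0 ≤ s → 𝓔.E (fun ω => euclNorm (Xd s ω)) ≤ C * s)
    (φ : (Fin d → ℝ) → ℝ) (L : ℝ) (hL : 0 ≤ L)
    (hφb : ∃ M, ∀ x, |φ x| ≤ M)
    (hφlip : ∀ x y, |φ x - φ y| ≤ L * euclNorm (x - y))
    (u : ℝ → (Fin d → ℝ) → ℝ)
    (hu : ∀ t x, u t x = 𝓔.E fun ω => φ (x + X t ω)) :
    (∀ t : ℝ, 0 ≤ t → ∀ x y, |u t x - u t y| ≤ L * euclNorm (x - y)) ∧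
      ∃ C₁ : ℝ, ∀ t : ℝ, 0 ≤ t → ∀ s : ℝ, 0 ≤ s → s ≤ 1 → ∀ x,
        |u (t + s) x - u t x| ≤ C₁ * Real.sqrt s := by
  have hXid := hX.2.2.2
  constructor
  · intro t ht x y
    rw [hu, hu]
    have := sle_abs_sub 𝓔 (fun ω => φ (x + X t ω)) (fun ω => φ (y + X t ω))
      (fun _ => L * euclNorm (x - y)) ?_
    · rwa [𝓔.const] at this
    · intro ω
      have := hφlip (x + X t ω) (y + X t ω)
      have heq : (x + X t ω) - (y + X t ω) = x - y := by abel
      rwa [heq] at this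
  · have hC : 0 ≤ C := by
      have h0 : (0:ℝ) ≤ 𝓔.E (fun ω => euclNorm (Xd 1 ω)) := by
        have := 𝓔.mono (fun _ => 0) (fun ω => euclNorm (Xd 1 ω))
          (fun ω => euclNorm_nonneg_s11 _)
        rwa [𝓔.const] at this
      have := hdC 1 zero_le_one
      linarith
    refine ⟨L * (2 * C), ?_⟩
    intro t ht s hs hs1 x
    rcases eq_or_lt_of_le hs with hs0 | hs0
    · rw [← hs0, add_zero, sub_self, abs_zero, Real.sqrt_zero, mul_zero]
    · have hsqrt : s ≤ Real.sqrt s := by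
        nlinarith [Real.sq_sqrt hs, Real.sqrt_nonneg s]
      have hsqnn : 0 ≤ Real.sqrt s := Real.sqrt_nonneg s
      have h1 : |u (t + s) x - u t x| ≤
          𝓔.E (fun ω => L * euclNorm (fun i => X (t + s) ω i - X t ω i)) := by
        rw [hu, hu]
        refine sle_abs_sub 𝓔 _ _ _ (fun ω => ?_)
        have := hφlip (x + X (t + s) ω) (x + X t ω)
        have heq : (x + X (t + s) ω) - (x + X t ω) = fun i => X (t + s) ω i - X t ω i := by
          funext i; simp
        rwa [heq] at this
      have h2 : 𝓔.E (fun ω => L * euclNorm (fun i => X (t + s) ω i - X t ω i))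
          = L * 𝓔.E (fun ω => euclNorm (fun i => X (t + s) ω i - X t ω i)) :=
        𝓔.poshom L hL _
      have h3 : 𝓔.E (fun ω => euclNorm (fun i => X (t + s) ω i - X t ω i))
          = 𝓔.E (fun ω => euclNorm (X s ω)) :=
        hXid t s ht hs euclNorm euclNorm_lip
      have h4 : 𝓔.E (fun ω => euclNorm (X s ω)) ≤
          𝓔.E (fun ω => euclNorm (Xc s ω) + euclNorm (Xd s ω)) := by
        refine 𝓔.mono _ _ (fun ω => ?_)
        rw [hdecomp]
        exact euclNorm_add_le _ _
      have h5 : 𝓔.E (fun ω => euclNorm (Xc s ω) + euclNorm (Xd s ω)) ≤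
          𝓔.E (fun ω => euclNorm (Xc s ω)) + 𝓔.E (fun ω => euclNorm (Xd s ω)) := by
        have := 𝓔.subadd (fun ω => euclNorm (Xc s ω) + euclNorm (Xd s ω))
          (fun ω => euclNorm (Xd s ω))
        have heq : (fun ω => (euclNorm (Xc s ω) + euclNorm (Xd s ω)) - euclNorm (Xd s ω))
            = fun ω => euclNorm (Xc s ω) := by funext ω; ring
        rw [heq] at this
        linarith
      have h6 := hcC s hs0 hs1
      have h7 := hdC s hs
      have h8 : C * s ≤ C * Real.sqrt s := by nlinarith
      calc |u (t + s) x - u t x|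
          ≤ L * 𝓔.E (fun ω => euclNorm (X s ω)) := by rw [← h3, ← h2]; exact h1
        _ ≤ L * (C * Real.sqrt s + C * Real.sqrt s) := by
            apply mul_le_mul_of_nonneg_left _ hL
            linarith
        _ = L * (2 * C) * Real.sqrt s := by ring
end

section
/- Fix positive integers n, d and let J_{nd} be the nd×nd symmetric matrix whose d×d diagonal blocks equal (n−1)I_d and whose off-diagonal blocks equal −I_d. Let X_1, …, X_n be d×d real symmetric matrices such that the block diagonal matrix diag(X_1, …, X_n) ≤ J_{nd} in the Loewner order. Then for each γ ∈ (0, 1/n): each I_d − γX_i is invertible; the matrices X_i^γ := X_i(I_d − γX_i)^{-1} satisfy X_i^γ ≥ X_i for i = 1, …, n; and −(1/γ) I_{nd} ≤ diag(X_1^γ, …, X_n^γ) ≤ (1/(1 − nγ)) J_{nd}. -/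
open Matrix

/-- The `nd × nd` matrix `J_{nd}` with `n × n` block structure of `d × d` blocks:
diagonal blocks `(n−1)I_d`, off-diagonal blocks `−I_d`. -/
def Jmat (n d : ℕ) : Matrix (Fin n × Fin d) (Fin n × Fin d) ℝ :=
  Matrix.of fun p q => if p.2 = q.2 then (if p.1 = q.1 then (n : ℝ) - 1 else -1) else 0

/-- The `nd × nd` block diagonal matrix `diag(X_1, …, X_n)`. -/
def blockDiag {n d : ℕ} (X : Fin n → Matrix (Fin d) (Fin d) ℝ) :
    Matrix (Fin n × Fin d) (Fin n × Fin d) ℝ :=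
  Matrix.of fun p q => if p.1 = q.1 then X p.1 p.2 q.2 else 0

/-!
Write `D = diag(X_1, …, X_n)`, `Q = I - γD` and `P = I - γJ`; the hypothesis says
`Q - P = γ(J - D) ≥ 0`. With `B = [I_d ⋯ I_d]` we have `J = nI - BᴴB` and `BBᴴ = nI`, so
`P = (1 - nγ)I + γBᴴB > 0` and `J² = nJ`, whence `P⁻¹ = I + γ/(1 - nγ) J`. Then `Q ≥ P > 0`, so the
diagonal blocks `I - γX_i` of `Q` are positive definite, and the resolvent identity
`(I - γX)⁻¹ = I + γX(I - γX)⁻¹` gives `Q⁻¹ = I + γ diag(X_i^γ)`. Now `Q⁻¹ ≥ 0` is the lower bound,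
`Q⁻¹ ≤ P⁻¹` (the inverse is operator antitone) is the upper bound, and
`X^γ - X = γ X (I - γX)⁻¹ X ≥ 0`.
-/

namespace Matrix

variable {m : Type*} [Fintype m] [DecidableEq m]

section Resolvent

variable {K : Type*} [Field K] {A : Matrix m m K} {γ : K}

theorem inv_one_sub_smul_eq_one_add_smul_mul_inv (h : IsUnit (1 - γ • A)) :
    (1 - γ • A)⁻¹ = 1 + γ • (A * (1 - γ • A)⁻¹) := by
  have h' := (isUnit_iff_isUnit_det _).mp h
  calc (1 - γ • A)⁻¹ = (1 - γ • A) * (1 - γ • A)⁻¹ + γ • (A * (1 - γ • A)⁻¹) := by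
        rw [sub_mul, one_mul, smul_mul_assoc, sub_add_cancel]
    _ = 1 + γ • (A * (1 - γ • A)⁻¹) := by rw [mul_nonsing_inv _ h']

theorem mul_inv_one_sub_smul_sub_self (h : IsUnit (1 - γ • A)) :
    A * (1 - γ • A)⁻¹ - A = γ • (A * (1 - γ • A)⁻¹ * A) := by
  have h' := (isUnit_iff_isUnit_det _).mp h
  calc A * (1 - γ • A)⁻¹ - A
        = A * ((1 - γ • A)⁻¹ * (1 - γ • A) + γ • ((1 - γ • A)⁻¹ * A)) - A := by
        rw [mul_sub, mul_one, mul_smul_comm, sub_add_cancel]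
    _ = γ • (A * (1 - γ • A)⁻¹ * A) := by
        rw [nonsing_inv_mul _ h', mul_add, mul_one, add_sub_cancel_left, mul_smul_comm, mul_assoc]

theorem inv_one_sub_smul_of_mul_self_eq_smul {J : Matrix m m K} {s : K} (hJ : J * J = s • J)
    (hsγ : 1 - s * γ ≠ 0) : (1 - γ • J)⁻¹ = 1 + (γ / (1 - s * γ)) • J := by
  refine inv_eq_right_inv ?_
  calc (1 - γ • J) * (1 + (γ / (1 - s * γ)) • J)
      = 1 + ((γ / (1 - s * γ)) * (1 - s * γ) - γ) • J := by
        simp only [sub_mul, mul_add, mul_one, one_mul, smul_mul_assoc, mul_smul_comm, hJ, smul_smul]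
        module
    _ = 1 := by rw [div_mul_cancel₀ _ hsγ, sub_self, zero_smul, add_zero]

end Resolvent

section Loewner

open scoped ComplexOrder in
theorem PosDef.posSemidef_inv_sub_inv {𝕜 : Type*} [RCLike 𝕜] {P Q : Matrix m m 𝕜}
    (hP : P.PosDef) (hPQ : (Q - P).PosSemidef) : (P⁻¹ - Q⁻¹).PosSemidef := by
  have hQ : Q.PosDef := by simpa using hP.add_posSemidef hPQ
  have hPdet := (isUnit_iff_isUnit_det _).mp hP.isUnit
  have hQdet := (isUnit_iff_isUnit_det _).mp hQ.isUnit
  -- `P⁻¹ - Q⁻¹ = Q⁻¹ (Q - P) P⁻¹`; substituting `P⁻¹ = Q⁻¹ + P⁻¹ (Q - P) Q⁻¹` into it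
  -- writes it as a sum of two congruences of positive semidefinite matrices
  have key : P⁻¹ - Q⁻¹ = Q⁻¹ᴴ * (Q - P) * Q⁻¹ + ((Q - P) * Q⁻¹)ᴴ * P⁻¹ * ((Q - P) * Q⁻¹) := by
    rw [conjTranspose_mul, hQ.inv.isHermitian.eq, hPQ.isHermitian.eq]
    simp only [sub_mul, mul_sub, mul_assoc, nonsing_inv_mul_cancel_left _ _ hPdet,
      mul_nonsing_inv _ hQdet, nonsing_inv_mul _ hQdet, mul_nonsing_inv _ hPdet, mul_one, one_mul]
    abel
  rw [key]
  exact (hPQ.conjTranspose_mul_mul_same _).add (hP.inv.posSemidef.conjTranspose_mul_mul_same _)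

theorem posSemidef_mul_inv_one_sub_smul_sub_self {A : Matrix m m ℝ} {γ : ℝ}
    (hA : A.IsHermitian) (hγ : 0 ≤ γ) (h : (1 - γ • A).PosDef) :
    (A * (1 - γ • A)⁻¹ - A).PosSemidef := by
  rw [mul_inv_one_sub_smul_sub_self h.isUnit, ← smul_mul_assoc, ← mul_smul_comm]
  nth_rw 1 [← hA.eq]
  exact (h.inv.posSemidef.smul hγ).conjTranspose_mul_mul_same A

end Loewner

end Matrix

section BlockDiag

variable {n d : ℕ}

def blockDiagAlgHom (n d : ℕ) :
    (Fin n → Matrix (Fin d) (Fin d) ℝ) →ₐ[ℝ] Matrix (Fin n × Fin d) (Fin n × Fin d) ℝ :=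
  (reindexAlgEquiv ℝ ℝ (Equiv.prodComm (Fin d) (Fin n))).toAlgHom.comp
    { blockDiagonalRingHom (Fin d) (Fin n) ℝ with
      commutes' := fun r => by
        simp [Algebra.algebraMap_eq_smul_one, blockDiagonal_smul] }

theorem blockDiagAlgHom_apply (X : Fin n → Matrix (Fin d) (Fin d) ℝ) :
    blockDiagAlgHom n d X = blockDiag X := by
  ext ⟨i, k⟩ ⟨j, l⟩
  simp [blockDiagAlgHom, _root_.blockDiag, blockDiagonal_apply]

theorem one_sub_smul_blockDiag (γ : ℝ) (X : Fin n → Matrix (Fin d) (Fin d) ℝ) :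
    1 - γ • blockDiag X = blockDiag fun i => 1 - γ • X i := by
  rw [← blockDiagAlgHom_apply, ← blockDiagAlgHom_apply, ← map_one (blockDiagAlgHom n d),
    ← map_smul, ← map_sub]
  rfl

theorem blockDiag_inv {Y : Fin n → Matrix (Fin d) (Fin d) ℝ} (hY : ∀ i, IsUnit (Y i)) :
    (blockDiag Y)⁻¹ = blockDiag fun i => (Y i)⁻¹ := by
  refine inv_eq_right_inv ?_
  have hY' : (Y * fun i => (Y i)⁻¹) = 1 :=
    funext fun i => mul_nonsing_inv _ ((isUnit_iff_isUnit_det _).mp (hY i))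
  simp only [← blockDiagAlgHom_apply, ← map_mul, hY', map_one]

theorem submatrix_blockDiag (X : Fin n → Matrix (Fin d) (Fin d) ℝ) (i : Fin n) :
    (blockDiag X).submatrix (Prod.mk i) (Prod.mk i) = X i := by
  ext k l
  simp [_root_.blockDiag]

theorem inv_one_sub_smul_blockDiag {X : Fin n → Matrix (Fin d) (Fin d) ℝ} {γ : ℝ}
    (hX : ∀ i, IsUnit (1 - γ • X i)) :
    (1 - γ • blockDiag X)⁻¹ = 1 + γ • blockDiag fun i => X i * (1 - γ • X i)⁻¹ := by
  have hblocks : (fun i => (1 - γ • X i)⁻¹) = 1 + γ • fun i => X i * (1 - γ • X i)⁻¹ :=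
    funext fun i => inv_one_sub_smul_eq_one_add_smul_mul_inv (hX i)
  rw [one_sub_smul_blockDiag, blockDiag_inv hX, hblocks, ← blockDiagAlgHom_apply,
    ← blockDiagAlgHom_apply, map_add, map_one, map_smul]

end BlockDiag

section Jmat

variable {n d : ℕ}

/-- The `d × nd` matrix `[I_d ⋯ I_d]`. -/
def idBlockRow (n d : ℕ) : Matrix (Fin d) (Fin n × Fin d) ℝ :=
  of fun k q => if k = q.2 then 1 else 0

theorem Jmat_eq : Jmat n d = (n : ℝ) • 1 - (idBlockRow n d)ᴴ * idBlockRow n d := by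
  ext ⟨i, k⟩ ⟨j, l⟩
  by_cases hkl : k = l <;> by_cases hij : i = j <;>
    simp [Jmat, idBlockRow, mul_apply, one_apply, hkl, hij, eq_comm]

theorem idBlockRow_mul_conjTranspose :
    idBlockRow n d * (idBlockRow n d)ᴴ = (n : ℝ) • 1 := by
  ext k l
  by_cases hkl : k = l <;> simp [idBlockRow, mul_apply, one_apply, hkl, Fintype.sum_prod_type]

theorem Jmat_mul_self : Jmat n d * Jmat n d = (n : ℝ) • Jmat n d := by
  rw [Jmat_eq]
  set B := idBlockRow n d
  have hBB : Bᴴ * B * (Bᴴ * B) = (n : ℝ) • (Bᴴ * B) := by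
    rw [Matrix.mul_assoc, ← Matrix.mul_assoc B, idBlockRow_mul_conjTranspose, Matrix.smul_mul,
      Matrix.one_mul, Matrix.mul_smul]
  rw [sub_mul, mul_sub, mul_sub, hBB]
  simp only [smul_mul_assoc, mul_smul_comm, one_mul, mul_one]
  module

theorem posDef_one_sub_smul_Jmat {γ : ℝ} (hγ : 0 ≤ γ) (hnγ : n * γ < 1) :
    (1 - γ • Jmat n d).PosDef := by
  have h : 1 - γ • Jmat n d = (1 - n * γ) • 1 + γ • ((idBlockRow n d)ᴴ * idBlockRow n d) := by
    rw [Jmat_eq]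
    module
  rw [h]
  exact (PosDef.one.smul (sub_pos.mpr hnγ)).add_posSemidef
    ((posSemidef_conjTranspose_mul_self _).smul hγ)

end Jmat

theorem stmt18_general (n d : ℕ) (hn : 0 < n)
    (X : Fin n → Matrix (Fin d) (Fin d) ℝ) (hsymm : ∀ i, (X i).IsSymm)
    (hle : (Jmat n d - blockDiag X).PosSemidef)
    (γ : ℝ) (hγ0 : 0 < γ) (hγn : γ < 1 / (n : ℝ)) :
    (∀ i, IsUnit (1 - γ • X i)) ∧
      (∀ i, (X i * (1 - γ • X i)⁻¹ - X i).PosSemidef) ∧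
      (blockDiag (fun i => X i * (1 - γ • X i)⁻¹) + γ⁻¹ • 1).PosSemidef ∧
      ((1 / (1 - (n : ℝ) * γ)) • Jmat n d -
        blockDiag fun i => X i * (1 - γ • X i)⁻¹).PosSemidef := by
  have hnγ : (n : ℝ) * γ < 1 := by
    rwa [lt_div_iff₀ (by exact_mod_cast hn), mul_comm] at hγn
  have hP := posDef_one_sub_smul_Jmat (d := d) hγ0.le hnγ
  have hQP : ((1 - γ • blockDiag X) - (1 - γ • Jmat n d)).PosSemidef := by
    rw [sub_sub_sub_cancel_left, ← smul_sub]
    exact hle.smul hγ0.le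
  have hQ : (1 - γ • blockDiag X).PosDef := by simpa using hP.add_posSemidef hQP
  have hblocks : ∀ i, (1 - γ • X i).PosDef := fun i => by
    simpa [one_sub_smul_blockDiag, submatrix_blockDiag] using
      hQ.submatrix (Prod.mk_right_injective i)
  have hQinv := inv_one_sub_smul_blockDiag fun i => (hblocks i).isUnit
  refine ⟨fun i => (hblocks i).isUnit,
    fun i => posSemidef_mul_inv_one_sub_smul_sub_self (isHermitian_iff_isSymm.mpr (hsymm i))
      hγ0.le (hblocks i), ?_, ?_⟩
  · have h : blockDiag (fun i => X i * (1 - γ • X i)⁻¹) + γ⁻¹ • 1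
        = γ⁻¹ • (1 - γ • blockDiag X)⁻¹ := by
      rw [hQinv, smul_add, smul_smul, inv_mul_cancel₀ hγ0.ne', one_smul, add_comm]
    rw [h]
    exact hQ.inv.posSemidef.smul (inv_nonneg.mpr hγ0.le)
  · have h : (1 / (1 - (n : ℝ) * γ)) • Jmat n d - blockDiag (fun i => X i * (1 - γ • X i)⁻¹)
        = γ⁻¹ • ((1 - γ • Jmat n d)⁻¹ - (1 - γ • blockDiag X)⁻¹) := by
      rw [inv_one_sub_smul_of_mul_self_eq_smul Jmat_mul_self (sub_pos.mpr hnγ).ne', hQinv]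
      match_scalars <;> field_simp
      ring
    rw [h]
    exact (hP.posSemidef_inv_sub_inv hQP).smul (inv_nonneg.mpr hγ0.le)

/-- If `diag(X_1, …, X_n) ≤ J_{nd}` in the Loewner order, then for `γ ∈ (0, 1/n)`
each `I − γX_i` is invertible, `X_i^γ := X_i(I − γX_i)⁻¹ ≥ X_i`, and
`−(1/γ)I ≤ diag(X_1^γ, …, X_n^γ) ≤ (1/(1 − nγ)) J_{nd}`. -/
theorem stmt18 (n d : ℕ) (hn : 0 < n) (hd : 0 < d)
    (X : Fin n → Matrix (Fin d) (Fin d) ℝ) (hsymm : ∀ i, (X i).IsSymm)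
    (hle : (Jmat n d - blockDiag X).PosSemidef)
    (γ : ℝ) (hγ0 : 0 < γ) (hγn : γ < 1 / (n : ℝ)) :
    (∀ i, IsUnit (1 - γ • X i)) ∧
      (∀ i, (X i * (1 - γ • X i)⁻¹ - X i).PosSemidef) ∧
      (blockDiag (fun i => X i * (1 - γ • X i)⁻¹) + γ⁻¹ • 1).PosSemidef ∧
      ((1 / (1 - (n : ℝ) * γ)) • Jmat n d -
        blockDiag fun i => X i * (1 - γ • X i)⁻¹).PosSemidef :=
  stmt18_general n d hn X hsymm hle γ hγ0 hγn
end
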